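/- arXiv:1612.05518 — 7 statements merged into one kernel-verified Lean document; each statement's English description precedes it below -/
import Mathlib

section
/- Let b ≥ 2 and L = ℓ_r M^r + ⋯ + ℓ_0 with ℓ_0 ℓ_r ≠ 0, v_k = val(ℓ_k). Then the valuation v of any nonzero formal Puiseux series solution of L y = 0 satisfies −v_r/(b^{r−1}(b−1)) ≤ v ≤ v_0/(b−1). -/
/-!
Write `v = val y`. The term `ℓ_k · M^k y` has valuation `v_k + b^k v`, and since the terms of
`L y` cancel, the minimum of these valuations must be attained by at least two indices. If `v`
were larger than `v_0 / (b - 1)`, the `k = 0` term would be the unique minimiser; if `v` were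
smaller than `-v_r / (b^(r-1) (b-1))`, the `k = r` term would be.
-/

open Polynomial

noncomputable section

/-- A polynomial viewed as a Hahn series with rational exponents. -/
def polyToHahn {K : Type*} [Field K] (p : K[X]) : HahnSeries ℚ K :=
  ∑ i ∈ Finset.range (p.natDegree + 1), HahnSeries.single (i : ℚ) (p.coeff i)

/-- The Mahler operator `y(x) ↦ y(x^b)` on Hahn series with rational exponents:
it rescales every exponent by the factor `b`. -/
def mahlerHahn {K : Type*} [Field K] (b : ℕ) (y : HahnSeries ℚ K) : HahnSeries ℚ K :=
  if hb : 0 < b then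
    HahnSeries.embDomain
      (OrderEmbedding.ofStrictMono (fun q : ℚ => (b : ℚ) * q)
        (fun _ _ h => by
          have hb' : (0 : ℚ) < b := by exact_mod_cast hb
          exact mul_lt_mul_of_pos_left h hb')) y
  else 0

/-- `y` is a formal Puiseux series: its exponents are rationals
with a common denominator. -/
def IsPuiseux {K : Type*} [Field K] (y : HahnSeries ℚ K) : Prop :=
  ∃ n : ℕ, 0 < n ∧ ∀ q ∈ y.support, ∃ m : ℤ, q = (m : ℚ) / n

/-- The action `L y = Σ_k ℓ_k(x) y(x^{b^k})` of the linear Mahler operator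
`L = Σ_k ℓ_k M^k` on a Hahn series `y`. -/
def mahlerApply {K : Type*} [Field K] (b r : ℕ) (ℓ : Fin (r + 1) → K[X])
    (y : HahnSeries ℚ K) : HahnSeries ℚ K :=
  ∑ k : Fin (r + 1), polyToHahn (ℓ k) * (mahlerHahn b)^[(k : ℕ)] y

namespace HahnSeries

theorem order_embDomain {Γ Γ' R : Type*} [LinearOrder Γ] [Zero Γ] [PartialOrder Γ'] [Zero Γ']
    [Zero R] {f : Γ ↪o Γ'} {x : HahnSeries Γ R} (hx : x ≠ 0) :
    (embDomain f x).order = f x.order := by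
  have hfx : embDomain f x ≠ 0 := (embDomain_injective.ne hx).trans_eq embDomain_zero
  apply WithTop.coe_injective
  rw [order_eq_orderTop_of_ne_zero hfx, orderTop_embDomain, ← order_eq_orderTop_of_ne_zero hx,
    WithTop.map_coe]

theorem exists_ne_order_le_of_sum_eq_zero {Γ R ι : Type*} [LinearOrder Γ] [Zero Γ]
    [AddCommMonoid R] {s : Finset ι} {f : ι → HahnSeries Γ R} (hs : ∑ j ∈ s, f j = 0) {i : ι}
    (hi : i ∈ s) (hfi : f i ≠ 0) : ∃ j ∈ s, j ≠ i ∧ f j ≠ 0 ∧ (f j).order ≤ (f i).order := by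
  classical
  have hcoeff : ∑ j ∈ s, (f j).coeff (f i).order = 0 := by rw [← coeff_sum, hs, coeff_zero]
  rw [← Finset.add_sum_erase s _ hi] at hcoeff
  have hrest : ∑ j ∈ s.erase i, (f j).coeff (f i).order ≠ 0 := fun h0 =>
    hfi (coeff_order_eq_zero.mp (by rwa [h0, add_zero] at hcoeff))
  obtain ⟨j, hj, hfj⟩ := Finset.exists_ne_zero_of_sum_ne_zero hrest
  exact ⟨j, Finset.mem_of_mem_erase hj, Finset.ne_of_mem_erase hj,
    fun h => hfj (by rw [h, coeff_zero]), order_le_of_coeff_ne_zero hfj⟩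

end HahnSeries

section Mahler

variable {K : Type*} [Field K]

theorem polyToHahn_zero : polyToHahn (0 : K[X]) = 0 := by
  simp [polyToHahn]

theorem coeff_polyToHahn_natCast (p : K[X]) (n : ℕ) : (polyToHahn p).coeff n = p.coeff n := by
  rw [polyToHahn, HahnSeries.coeff_sum]
  simp only [HahnSeries.coeff_single, Nat.cast_inj]
  rw [Finset.sum_ite_eq, ite_eq_left_iff, Finset.mem_range, not_lt]
  exact fun hn => (p.coeff_eq_zero_of_natDegree_lt (by omega)).symm

theorem coeff_polyToHahn_of_lt_natTrailingDegree (p : K[X]) {q : ℚ}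
    (hq : q < p.natTrailingDegree) : (polyToHahn p).coeff q = 0 := by
  rw [polyToHahn, HahnSeries.coeff_sum]
  refine Finset.sum_eq_zero fun i _ => ?_
  rw [HahnSeries.coeff_single]
  split_ifs with h
  · subst h
    exact p.coeff_eq_zero_of_lt_natTrailingDegree (by exact_mod_cast hq)
  · rfl

theorem orderTop_polyToHahn {p : K[X]} (hp : p ≠ 0) :
    (polyToHahn p).orderTop = (p.natTrailingDegree : ℚ) := by
  refine le_antisymm (HahnSeries.orderTop_le_of_coeff_ne_zero ?_)
    (HahnSeries.le_orderTop_iff_forall.mpr fun q hq => ?_)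
  · rw [coeff_polyToHahn_natCast]
    exact trailingCoeff_nonzero_iff_nonzero.mpr hp
  · exact coeff_polyToHahn_of_lt_natTrailingDegree p (WithTop.coe_lt_coe.mp hq)

theorem polyToHahn_ne_zero {p : K[X]} (hp : p ≠ 0) : polyToHahn p ≠ 0 := by
  rw [← HahnSeries.orderTop_ne_top, orderTop_polyToHahn hp]
  exact WithTop.coe_ne_top

theorem order_polyToHahn {p : K[X]} (hp : p ≠ 0) :
    (polyToHahn p).order = p.natTrailingDegree := by
  apply WithTop.coe_injective
  rw [HahnSeries.order_eq_orderTop_of_ne_zero (polyToHahn_ne_zero hp), orderTop_polyToHahn hp]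

variable {b : ℕ}

theorem mahlerHahn_of_pos (hb : 0 < b) (y : HahnSeries ℚ K) :
    mahlerHahn b y = HahnSeries.embDomain
      (OrderEmbedding.ofStrictMono (fun q : ℚ => (b : ℚ) * q)
        (fun _ _ h => mul_lt_mul_of_pos_left h (Nat.cast_pos.mpr hb))) y :=
  dif_pos hb

theorem mahlerHahn_ne_zero (hb : 0 < b) {y : HahnSeries ℚ K} (hy : y ≠ 0) :
    mahlerHahn b y ≠ 0 := by
  rw [mahlerHahn_of_pos hb]
  exact (HahnSeries.embDomain_injective.ne hy).trans_eq HahnSeries.embDomain_zero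

theorem order_mahlerHahn (hb : 0 < b) {y : HahnSeries ℚ K} (hy : y ≠ 0) :
    (mahlerHahn b y).order = b * y.order := by
  rw [mahlerHahn_of_pos hb, HahnSeries.order_embDomain hy]
  rfl

theorem iterate_mahlerHahn_ne_zero (hb : 0 < b) {y : HahnSeries ℚ K} (hy : y ≠ 0) (k : ℕ) :
    (mahlerHahn b)^[k] y ≠ 0 := by
  induction k with
  | zero => exact hy
  | succ k ih =>
    rw [Function.iterate_succ_apply']
    exact mahlerHahn_ne_zero hb ih

theorem order_iterate_mahlerHahn (hb : 0 < b) {y : HahnSeries ℚ K} (hy : y ≠ 0) (k : ℕ) :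
    ((mahlerHahn b)^[k] y).order = b ^ k * y.order := by
  induction k with
  | zero => simp
  | succ k ih =>
    rw [Function.iterate_succ_apply', order_mahlerHahn hb (iterate_mahlerHahn_ne_zero hb hy k),
      ih, pow_succ', mul_assoc]

theorem order_polyToHahn_mul_iterate_mahlerHahn (hb : 0 < b) {p : K[X]} (hp : p ≠ 0)
    {y : HahnSeries ℚ K} (hy : y ≠ 0) (k : ℕ) :
    (polyToHahn p * (mahlerHahn b)^[k] y).order = p.natTrailingDegree + b ^ k * y.order := by
  rw [HahnSeries.order_mul (polyToHahn_ne_zero hp) (iterate_mahlerHahn_ne_zero hb hy k),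
    order_polyToHahn hp, order_iterate_mahlerHahn hb hy]

theorem exists_ne_le_of_mahlerApply_eq_zero (hb : 0 < b) {r : ℕ} {ℓ : Fin (r + 1) → K[X]}
    {y : HahnSeries ℚ K} (hy : y ≠ 0) (hsol : mahlerApply b r ℓ y = 0) {i : Fin (r + 1)}
    (hi : ℓ i ≠ 0) :
    ∃ j ≠ i, (ℓ j).natTrailingDegree + (b : ℚ) ^ (j : ℕ) * y.order ≤
      (ℓ i).natTrailingDegree + (b : ℚ) ^ (i : ℕ) * y.order := by
  have hterm : polyToHahn (ℓ i) * (mahlerHahn b)^[(i : ℕ)] y ≠ 0 :=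
    mul_ne_zero (polyToHahn_ne_zero hi) (iterate_mahlerHahn_ne_zero hb hy _)
  obtain ⟨j, -, hji, hj, hle⟩ :=
    HahnSeries.exists_ne_order_le_of_sum_eq_zero hsol (Finset.mem_univ i) hterm
  have hℓj : ℓ j ≠ 0 := fun h => hj (by rw [h, polyToHahn_zero, zero_mul])
  refine ⟨j, hji, ?_⟩
  rwa [order_polyToHahn_mul_iterate_mahlerHahn hb hℓj hy,
    order_polyToHahn_mul_iterate_mahlerHahn hb hi hy] at hle

end Mahler

section Arithmetic

variable {F : Type*} [Field F] [LinearOrder F] [IsStrictOrderedRing F] {a b c v : F}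

theorem add_lt_add_pow_mul_of_div_lt (hb : 1 < b) (ha : 0 ≤ a) (hc : 0 ≤ c) {j : ℕ}
    (hj : j ≠ 0) (hv : a / (b - 1) < v) : a + v < c + b ^ j * v := by
  have hb1 : 0 < b - 1 := sub_pos.mpr hb
  rw [div_lt_iff₀ hb1] at hv
  have hv0 : 0 < v := pos_of_mul_pos_left (ha.trans_lt hv) hb1.le
  have hbj : b * v ≤ b ^ j * v := mul_le_mul_of_nonneg_right (le_self_pow₀ hb.le hj) hv0.le
  nlinarith

theorem add_pow_mul_lt_of_lt_neg_div (hb : 1 < b) (ha : 0 ≤ a) (hc : 0 ≤ c) {j r : ℕ}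
    (hj : j < r) (hv : v < -a / (b ^ (r - 1) * (b - 1))) : a + b ^ r * v < c + b ^ j * v := by
  obtain ⟨m, rfl⟩ : ∃ m, r = m + 1 := ⟨r - 1, by omega⟩
  rw [Nat.add_sub_cancel] at hv
  have hden : 0 < b ^ m * (b - 1) := mul_pos (pow_pos (by linarith) m) (sub_pos.mpr hb)
  rw [lt_div_iff₀ hden] at hv
  have hv0 : v < 0 := by nlinarith
  have hbj : b ^ m * v ≤ b ^ j * v :=
    mul_le_mul_of_nonpos_right (pow_le_pow_right₀ hb.le (by omega)) hv0.le
  rw [pow_succ]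
  nlinarith

end Arithmetic

theorem stmt_10_general {K : Type*} [Field K] (b r : ℕ) (hb : 2 ≤ b)
    (ℓ : Fin (r + 1) → K[X]) (hl0 : ℓ 0 ≠ 0) (hlr : ℓ (Fin.last r) ≠ 0)
    (y : HahnSeries ℚ K) (hy : y ≠ 0)
    (hsol : mahlerApply b r ℓ y = 0) :
    -(((ℓ (Fin.last r)).natTrailingDegree : ℚ)) / ((b : ℚ) ^ (r - 1) * ((b : ℚ) - 1))
        ≤ y.order ∧
      y.order ≤ ((ℓ 0).natTrailingDegree : ℚ) / ((b : ℚ) - 1) := by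
  have hb0 : 0 < b := by omega
  have hb1 : (1 : ℚ) < b := by exact_mod_cast hb
  constructor
  · by_contra! hv
    obtain ⟨j, hj, hle⟩ := exists_ne_le_of_mahlerApply_eq_zero hb0 hy hsol hlr
    exact (add_pow_mul_lt_of_lt_neg_div hb1 (Nat.cast_nonneg _) (Nat.cast_nonneg _)
      (Fin.lt_last_iff_ne_last.mpr hj) hv).not_ge hle
  · by_contra! hv
    obtain ⟨j, hj, hle⟩ := exists_ne_le_of_mahlerApply_eq_zero hb0 hy hsol hl0
    rw [Fin.val_zero, pow_zero, one_mul] at hle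
    exact (add_lt_add_pow_mul_of_div_lt hb1 (Nat.cast_nonneg _) (Nat.cast_nonneg _)
      (Fin.val_ne_zero_iff.mpr hj) hv).not_ge hle

theorem stmt_10 {K : Type*} [Field K] (b r : ℕ) (hb : 2 ≤ b) (hr : 0 < r)
    (ℓ : Fin (r + 1) → K[X]) (hl0 : ℓ 0 ≠ 0) (hlr : ℓ (Fin.last r) ≠ 0)
    (y : HahnSeries ℚ K) (hy : y ≠ 0) (hP : IsPuiseux y)
    (hsol : mahlerApply b r ℓ y = 0) :
    -(((ℓ (Fin.last r)).natTrailingDegree : ℚ)) / ((b : ℚ) ^ (r - 1) * ((b : ℚ) - 1))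
        ≤ y.order ∧
      y.order ≤ ((ℓ 0).natTrailingDegree : ℚ) / ((b : ℚ) - 1) :=
  stmt_10_general b r hb ℓ hl0 hlr y hy hsol
end
end

section
/- Let b ≥ 2 and L = ℓ_r M^r + ⋯ + ℓ_0 with ℓ_0 ℓ_r ≠ 0, and let d_k = deg ℓ_k with d = max_k d_k. If p ∈ K[x] is a nonzero polynomial solution of L p = 0, then deg p ≤ d/(b^{r−1}(b−1)). -/
/-!
Write `n = deg p`. Composition with `X ^ b ^ k` multiplies degrees by `b ^ k`, so the top term
`ℓ_r(x) p(x^{b^r})` has degree at least `n b^r`, while every other term has degree at most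
`d + n b^{r-1}`. Since the terms sum to zero, the top term cannot exceed the others in degree,
whence `n b^{r-1} (b - 1) ≤ d`.
-/

open Polynomial

namespace Polynomial

theorem natDegree_le_of_sum_eq_zero {R ι : Type*} [Ring R] [DecidableEq ι] {s : Finset ι}
    {f : ι → R[X]} (hf : ∑ i ∈ s, f i = 0) {j : ι} (hj : j ∈ s) {n : ℕ}
    (hn : ∀ i ∈ s.erase j, (f i).natDegree ≤ n) : (f j).natDegree ≤ n := by
  rw [← Finset.add_sum_erase s f hj, add_eq_zero_iff_eq_neg] at hf
  rw [hf, natDegree_neg]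
  exact natDegree_sum_le_of_forall_le _ _ hn

theorem natDegree_mul_pow_le_of_sum_mul_expand_eq_zero {R : Type*} [CommRing R] [IsDomain R]
    {b r : ℕ} (hb : 0 < b) (ℓ : Fin (r + 1) → R[X]) (hlr : ℓ (Fin.last r) ≠ 0) {p : R[X]}
    (hp : p ≠ 0) (hsol : ∑ k : Fin (r + 1), ℓ k * expand R (b ^ (k : ℕ)) p = 0) :
    p.natDegree * b ^ r ≤
      (Finset.univ.sup fun k => (ℓ k).natDegree) + p.natDegree * b ^ (r - 1) := by
  have hexpand : ∀ m : ℕ, (expand R (b ^ m) p).natDegree = p.natDegree * b ^ m :=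
    fun m => natDegree_expand _ p
  have htop := natDegree_le_of_sum_eq_zero hsol (Finset.mem_univ (Fin.last r))
    (n := (Finset.univ.sup fun k => (ℓ k).natDegree) + p.natDegree * b ^ (r - 1))
    fun k hk => by
      have hkr : (k : ℕ) ≤ r - 1 := by
        have := Fin.val_lt_last (Finset.ne_of_mem_erase hk)
        omega
      calc (ℓ k * expand R (b ^ (k : ℕ)) p).natDegree
          ≤ (ℓ k).natDegree + (expand R (b ^ (k : ℕ)) p).natDegree := natDegree_mul_le
        _ ≤ _ := by
          rw [hexpand]
          gcongr
          exact Finset.le_sup (f := fun k => (ℓ k).natDegree) (Finset.mem_univ k)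
  rw [natDegree_mul hlr ((expand_ne_zero (pow_pos hb _)).mpr hp), Fin.val_last, hexpand] at htop
  omega

end Polynomial

theorem stmt_12_general {K : Type*} [Field K] (b r d : ℕ) (hb : 2 ≤ b) (hr : 0 < r)
    (ℓ : Fin (r + 1) → K[X]) (hlr : ℓ (Fin.last r) ≠ 0)
    (hd : d = Finset.univ.sup fun k => (ℓ k).natDegree)
    (p : K[X]) (hp : p ≠ 0)
    (hsol : ∑ k : Fin (r + 1), ℓ k * p.comp (X ^ b ^ (k : ℕ)) = 0) :
    (p.natDegree : ℚ) ≤ (d : ℚ) / ((b : ℚ) ^ (r - 1) * ((b : ℚ) - 1)) := by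
  obtain ⟨s, rfl⟩ : ∃ s, r = s + 1 := ⟨r - 1, by omega⟩
  simp only [← expand_eq_comp_X_pow] at hsol
  have hdeg := natDegree_mul_pow_le_of_sum_mul_expand_eq_zero (by omega) ℓ hlr hp hsol
  rw [← hd, Nat.add_sub_cancel, pow_succ] at hdeg
  have hb1 : (0 : ℚ) < b - 1 := by
    have : (2 : ℚ) ≤ b := by exact_mod_cast hb
    linarith
  rw [Nat.add_sub_cancel, le_div_iff₀ (by positivity)]
  have hdegQ : (p.natDegree : ℚ) * (b ^ s * b) ≤ d + p.natDegree * b ^ s := by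
    exact_mod_cast hdeg
  linear_combination hdegQ

theorem stmt_12 {K : Type*} [Field K] (b r d : ℕ) (hb : 2 ≤ b) (hr : 0 < r)
    (ℓ : Fin (r + 1) → K[X]) (hl0 : ℓ 0 ≠ 0) (hlr : ℓ (Fin.last r) ≠ 0)
    (hd : d = Finset.univ.sup fun k => (ℓ k).natDegree)
    (p : K[X]) (hp : p ≠ 0)
    (hsol : ∑ k : Fin (r + 1), ℓ k * p.comp (X ^ b ^ (k : ℕ)) = 0) :
    (p.natDegree : ℚ) ≤ (d : ℚ) / ((b : ℚ) ^ (r - 1) * ((b : ℚ) - 1)) :=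
  stmt_12_general b r d hb hr ℓ hlr hd p hp hsol
end

section
/- Let b ≥ 2 and let L = ℓ_r M^r + ⋯ + ℓ_0 with d = max_k deg ℓ_k. Suppose p, q ∈ K[x] with q ≠ 0 satisfy L(p/q) = 0 in K(x). Then deg p ≤ deg q + ⌊d/(b^r − b^{r−1})⌋. -/
/-!
Multiplying `L(p/q) = 0` by `∏ⱼ q(x^{bʲ})` gives a polynomial identity `∑ₖ fₖ = 0` with
`fₖ = ℓₖ · p(x^{bᵏ}) · ∏_{j ≠ k} q(x^{bʲ})` (`clearedTerm`). With `P = deg p`, `Q = deg q` and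
`T = Q · ∑ⱼ bʲ`, a nonzero `fₖ` has degree `deg ℓₖ + P bᵏ + T - Q bᵏ`. If `P > Q + ⌊d/(bʳ - bʳ⁻¹)⌋`,
then `(P - Q)(bʳ - bᵏ) ≥ (P - Q)(bʳ - bʳ⁻¹) > d` for every `k < r`, so `f_r` has strictly larger
degree than every other term and the sum cannot vanish.
-/

open Polynomial Finset

theorem Polynomial.sum_ne_zero_of_degree_lt {R ι : Type*} [Ring R] [DecidableEq ι]
    {s : Finset ι} {f : ι → R[X]} {i : ι} (hi : i ∈ s) (hfi : f i ≠ 0)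
    (hlt : ∀ j ∈ s, j ≠ i → (f j).degree < (f i).degree) : ∑ j ∈ s, f j ≠ 0 := by
  have hrest : (∑ j ∈ s.erase i, f j).degree < (f i).degree :=
    (degree_sum_le _ _).trans_lt <| (Finset.sup_lt_iff (bot_lt_iff_ne_bot.2
      (degree_ne_bot.2 hfi))).2 fun j hj => hlt j (mem_of_mem_erase hj) (ne_of_mem_erase hj)
  rw [← add_sum_erase s f hi, ← degree_ne_bot, degree_add_eq_left_of_degree_lt hrest]
  exact degree_ne_bot.2 hfi

theorem sum_mul_prod_erase_eq_zero_of_sum_div_eq_zero {ι A F : Type*} [DecidableEq ι]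
    [CommRing A] [Field F] {φ : A →+* F} (hφ : Function.Injective φ) {s : Finset ι}
    {a c : ι → A} (hc : ∀ i ∈ s, c i ≠ 0) (h : ∑ i ∈ s, φ (a i) / φ (c i) = 0) :
    ∑ i ∈ s, a i * ∏ j ∈ s.erase i, c j = 0 := by
  have hφc : ∀ i ∈ s, φ (c i) ≠ 0 := fun i hi => (map_ne_zero_iff φ hφ).2 (hc i hi)
  apply hφ
  rw [map_sum, map_zero, ← zero_mul (∏ j ∈ s, φ (c j)), ← h, sum_mul]
  refine sum_congr rfl fun i hi => ?_
  rw [map_mul, map_prod, ← mul_prod_erase s _ hi, div_mul_eq_mul_div, mul_comm (φ (c i)),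
    ← mul_assoc, mul_div_cancel_right₀ _ (hφc i hi)]

theorem Polynomial.natDegree_mul_prod_erase_add {R ι : Type*} [CommRing R] [IsDomain R]
    [DecidableEq ι] {s : Finset ι} {c : ι → R[X]} {a : R[X]} (ha : a ≠ 0)
    (hc : ∀ j ∈ s, c j ≠ 0) {k : ι} (hk : k ∈ s) :
    (a * ∏ j ∈ s.erase k, c j).natDegree + (c k).natDegree =
      a.natDegree + (∏ j ∈ s, c j).natDegree := by
  have hrest : ∏ j ∈ s.erase k, c j ≠ 0 :=
    prod_ne_zero_iff.2 fun j hj => hc j (mem_of_mem_erase hj)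
  rw [← prod_erase_mul s c hk, natDegree_mul ha hrest, natDegree_mul hrest (hc k hk), add_assoc]

theorem Nat.add_mul_pow_add_lt_of_add_div_lt {b r k d P Q : ℕ} (hb : 1 < b) (hk : k < r)
    (hP : Q + d / (b ^ r - b ^ (r - 1)) < P) :
    d + P * b ^ k + Q * b ^ r < P * b ^ r + Q * b ^ k := by
  obtain ⟨s, rfl⟩ : ∃ s, P = Q + s :=
    ⟨P - Q, by have := (Nat.le_add_right Q _).trans_lt hP; omega⟩
  obtain ⟨t, ht⟩ : ∃ t, b ^ r = b ^ k + t :=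
    ⟨b ^ r - b ^ k, by have := Nat.pow_le_pow_right (by omega : 0 < b) hk.le; omega⟩
  have hm : 0 < b ^ r - b ^ (r - 1) := Nat.sub_pos_of_lt (Nat.pow_lt_pow_right hb (by omega))
  have hst : d < s * t :=
    calc d < s * (b ^ r - b ^ (r - 1)) := (Nat.div_lt_iff_lt_mul hm).1 (by omega)
      _ ≤ s * t := Nat.mul_le_mul_left s <| by
        have := Nat.pow_le_pow_right (by omega : 0 < b) (by omega : k ≤ r - 1); omega
  rw [ht]
  nlinarith

section ClearingDenominators

variable {K : Type*} [Field K] {b r : ℕ} {ℓ : Fin (r + 1) → K[X]} {p q : K[X]}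

noncomputable def clearedTerm (b : ℕ) (ℓ : Fin (r + 1) → K[X]) (p q : K[X]) (k : Fin (r + 1)) :
    K[X] :=
  ℓ k * expand K (b ^ (k : ℕ)) p * ∏ j ∈ univ.erase k, expand K (b ^ (j : ℕ)) q

theorem sum_clearedTerm_eq_zero (hb : 0 < b) (hq : q ≠ 0)
    (hsol : ∑ k : Fin (r + 1), algebraMap K[X] (RatFunc K) (ℓ k) *
      (algebraMap K[X] (RatFunc K) (expand K (b ^ (k : ℕ)) p) /
        algebraMap K[X] (RatFunc K) (expand K (b ^ (k : ℕ)) q)) = 0) :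
    ∑ k, clearedTerm b ℓ p q k = 0 := by
  simp only [← map_mul, ← mul_div_assoc] at hsol
  exact sum_mul_prod_erase_eq_zero_of_sum_div_eq_zero (RatFunc.algebraMap_injective K)
    (fun k _ => (expand_ne_zero (Nat.pow_pos hb)).2 hq) hsol

theorem clearedTerm_ne_zero (hb : 0 < b) {k : Fin (r + 1)} (hk : ℓ k ≠ 0) (hp : p ≠ 0)
    (hq : q ≠ 0) : clearedTerm b ℓ p q k ≠ 0 :=
  mul_ne_zero (mul_ne_zero hk ((expand_ne_zero (Nat.pow_pos hb)).2 hp))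
    (prod_ne_zero_iff.2 fun _ _ => (expand_ne_zero (Nat.pow_pos hb)).2 hq)

theorem natDegree_clearedTerm_add (hb : 0 < b) {k : Fin (r + 1)} (hk : ℓ k ≠ 0) (hp : p ≠ 0)
    (hq : q ≠ 0) :
    (clearedTerm b ℓ p q k).natDegree + q.natDegree * b ^ (k : ℕ) =
      (ℓ k).natDegree + p.natDegree * b ^ (k : ℕ) +
        (∏ j : Fin (r + 1), expand K (b ^ (j : ℕ)) q).natDegree := by
  have hexp : ∀ {f : K[X]}, f ≠ 0 → ∀ n : ℕ, expand K (b ^ n) f ≠ 0 :=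
    fun hf n => (expand_ne_zero (Nat.pow_pos hb)).2 hf
  rw [clearedTerm, ← natDegree_expand, natDegree_mul_prod_erase_add (mul_ne_zero hk (hexp hp _))
    (fun j _ => hexp hq _) (mem_univ k), natDegree_mul hk (hexp hp _), natDegree_expand]

theorem degree_clearedTerm_lt_last (hb : 1 < b) {d : ℕ} (hℓ : ∀ k, (ℓ k).natDegree ≤ d)
    (hlr : ℓ (Fin.last r) ≠ 0) (hp : p ≠ 0) (hq : q ≠ 0)
    (hP : q.natDegree + d / (b ^ r - b ^ (r - 1)) < p.natDegree) {k : Fin (r + 1)}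
    (hk : k ≠ Fin.last r) :
    (clearedTerm b ℓ p q k).degree < (clearedTerm b ℓ p q (Fin.last r)).degree := by
  have hb₀ : 0 < b := by omega
  rcases eq_or_ne (ℓ k) 0 with hk₀ | hk₀
  · simpa [clearedTerm, hk₀, bot_lt_iff_ne_bot] using clearedTerm_ne_zero hb₀ hlr hp hq
  refine degree_lt_degree ?_
  have hdeg_k := natDegree_clearedTerm_add hb₀ hk₀ hp hq
  have hdeg_last := natDegree_clearedTerm_add hb₀ hlr hp hq
  have hcmp := Nat.add_mul_pow_add_lt_of_add_div_lt hb (Fin.val_lt_last hk) hP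
  rw [Fin.val_last] at hdeg_last
  have hℓk := hℓ k
  omega

end ClearingDenominators

theorem stmt_13_general {K : Type*} [Field K] (b r d : ℕ) (hb : 2 ≤ b)
    (ℓ : Fin (r + 1) → K[X]) (hlr : ℓ (Fin.last r) ≠ 0)
    (hd : d = Finset.univ.sup fun k => (ℓ k).natDegree)
    (p q : K[X]) (hq : q ≠ 0)
    (hsol : ∑ k : Fin (r + 1),
        algebraMap K[X] (RatFunc K) (ℓ k) *
          (algebraMap K[X] (RatFunc K) (p.comp (X ^ b ^ (k : ℕ))) /
            algebraMap K[X] (RatFunc K) (q.comp (X ^ b ^ (k : ℕ)))) = 0) :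
    p.natDegree ≤ q.natDegree + d / (b ^ r - b ^ (r - 1)) := by
  by_contra! hP
  have hp : p ≠ 0 := by rintro rfl; simp at hP
  have hℓ : ∀ k, (ℓ k).natDegree ≤ d :=
    fun k => hd ▸ le_sup (f := fun k => (ℓ k).natDegree) (mem_univ k)
  exact sum_ne_zero_of_degree_lt (mem_univ (Fin.last r))
    (clearedTerm_ne_zero (by omega) hlr hp hq)
    (fun k _ hk => degree_clearedTerm_lt_last (by omega) hℓ hlr hp hq hP hk)
    (sum_clearedTerm_eq_zero (by omega) hq hsol)

theorem stmt_13 {K : Type*} [Field K] (b r d : ℕ) (hb : 2 ≤ b) (hr : 0 < r)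
    (ℓ : Fin (r + 1) → K[X]) (hl0 : ℓ 0 ≠ 0) (hlr : ℓ (Fin.last r) ≠ 0)
    (hd : d = Finset.univ.sup fun k => (ℓ k).natDegree)
    (p q : K[X]) (hq : q ≠ 0)
    (hsol : ∑ k : Fin (r + 1),
        algebraMap K[X] (RatFunc K) (ℓ k) *
          (algebraMap K[X] (RatFunc K) (p.comp (X ^ b ^ (k : ℕ))) /
            algebraMap K[X] (RatFunc K) (q.comp (X ^ b ^ (k : ℕ)))) = 0) :
    p.natDegree ≤ q.natDegree + d / (b ^ r - b ^ (r - 1)) :=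
  stmt_13_general b r d hb ℓ hlr hd p q hq hsol
end

section
/- Let b ≥ 2 and L = ℓ_r M^r + ⋯ + ℓ_0 with ℓ_0 ℓ_r ≠ 0 and d = max_k deg ℓ_k. If d < b^{r−1}, then every rational function solution y ∈ K(x) of L y = 0 is a constant. -/
/-!
Write `y = P / Q` in lowest terms and clear denominators in `L y = 0`. Since
`b ^ r - b ^ (r - 1) ≥ b ^ (r - 1) > d`, the term `ℓ_r y(x ^ b ^ r)` would dominate all
others, at `0` if `Q(0) = 0` and at `∞` if `deg P > deg Q`. At a root `δ ≠ 0` of `Q`, the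
polynomial `Q(x ^ b ^ r)` divides `ℓ_r ∏_{j < r} Q(x ^ b ^ j)`, so each of the `b ^ r`
solutions of `β ^ b ^ r = δ` is a root of `ℓ_r` or has some `β ^ b ^ j` (`j < r`) a root of
`Q`. Hence every root of `Q` has a `b`-th root among the finitely many `δ' ^ b ^ i` (`δ'` a
root, `i < r`), so `x ↦ x ^ b` permutes that set; then the solutions of the second kind
satisfy `β ^ b ^ (r - 1) = γ` for a single `γ`, and `b ^ r ≤ d + b ^ (r - 1)`, a
contradiction. So `Q` is constant, and then so is `P`.
-/

open Polynomial Finset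

theorem add_pow_mul_lt_pow_mul {b r d k z : ℕ} (hb : 2 ≤ b) (hd : d < b ^ (r - 1)) (hk : k < r)
    (hz : 0 < z) : d + b ^ k * z < b ^ r * z := by
  have hbk : b ^ k ≤ b ^ (r - 1) := Nat.pow_le_pow_right (by omega) (by omega)
  have hbr : b ^ r = b ^ (r - 1) * b := by rw [← pow_succ, Nat.sub_add_cancel (by omega)]
  have : b ^ k * z ≤ b ^ (r - 1) * z := Nat.mul_le_mul_right z hbk
  have : b ^ (r - 1) ≤ b ^ (r - 1) * z := Nat.le_mul_of_pos_right _ hz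
  rw [hbr]
  nlinarith

section SumEqZero

variable {ι R : Type*} [CommRing R] [DecidableEq ι] {s : Finset ι} {i : ι}

theorem Finset.dvd_of_sum_eq_zero {f : ι → R} {c : R} (hi : i ∈ s) (h : ∑ k ∈ s, f k = 0)
    (hc : ∀ k ∈ s, k ≠ i → c ∣ f k) : c ∣ f i := by
  rw [← add_sum_erase s f hi, add_eq_zero_iff_eq_neg] at h
  rw [h, dvd_neg]
  exact dvd_sum fun k hk => hc k (mem_of_mem_erase hk) (ne_of_mem_erase hk)

theorem Finset.natDegree_le_of_sum_eq_zero {f : ι → R[X]} {n : ℕ} (hi : i ∈ s)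
    (h : ∑ k ∈ s, f k = 0) (hn : ∀ k ∈ s, k ≠ i → (f k).natDegree ≤ n) :
    (f i).natDegree ≤ n := by
  rw [← add_sum_erase s f hi, add_eq_zero_iff_eq_neg] at h
  rw [h, natDegree_neg]
  exact natDegree_sum_le_of_forall_le _ _ fun k hk =>
    hn k (mem_of_mem_erase hk) (ne_of_mem_erase hk)

theorem Finset.le_rootMultiplicity_of_sum_eq_zero {f : ι → R[X]} {n : ℕ} {a : R}
    (hi : i ∈ s) (h : ∑ k ∈ s, f k = 0) (hfi : f i ≠ 0)
    (hn : ∀ k ∈ s, k ≠ i → (X - C a) ^ n ∣ f k) : n ≤ (f i).rootMultiplicity a :=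
  (le_rootMultiplicity_iff hfi).2 (dvd_of_sum_eq_zero hi h hn)

theorem Finset.dvd_mul_prod_erase_of_sum_eq_zero {a p q : ι → R} (hi : i ∈ s)
    (hcop : IsCoprime (q i) (p i)) (h : ∑ k ∈ s, a k * p k * ∏ j ∈ s.erase k, q j = 0) :
    q i ∣ a i * ∏ j ∈ s.erase i, q j := by
  have : q i ∣ p i * (a i * ∏ j ∈ s.erase i, q j) := by
    rw [mul_left_comm, ← mul_assoc]
    exact dvd_of_sum_eq_zero (f := fun k => a k * p k * ∏ j ∈ s.erase k, q j) hi h fun k _ hk =>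
      (dvd_prod_of_mem q (mem_erase.2 ⟨hk.symm, hi⟩)).mul_left _
  exact hcop.dvd_of_dvd_mul_left this

end SumEqZero

theorem Finset.sum_mul_prod_erase_eq_zero {ι F : Type*} [Field F] [DecidableEq ι] {s : Finset ι}
    {a p q : ι → F} (hq : ∀ k ∈ s, q k ≠ 0) (h : ∑ k ∈ s, a k * (p k / q k) = 0) :
    ∑ k ∈ s, a k * p k * ∏ j ∈ s.erase k, q j = 0 := by
  calc ∑ k ∈ s, a k * p k * ∏ j ∈ s.erase k, q j
      = (∑ k ∈ s, a k * (p k / q k)) * ∏ j ∈ s, q j := by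
        rw [sum_mul]
        refine sum_congr rfl fun k hk => ?_
        rw [← mul_prod_erase s q hk]
        field_simp [hq k hk]
    _ = 0 := by rw [h, zero_mul]

theorem Polynomial.rootMultiplicity_zero_expand {R : Type*} [CommRing R] [IsDomain R] {n : ℕ}
    (hn : 0 < n) (f : R[X]) :
    (expand R n f).rootMultiplicity 0 = n * f.rootMultiplicity 0 := by
  rcases eq_or_ne f 0 with rfl | hf
  · simp
  obtain ⟨g, hfg, hg⟩ := f.exists_eq_pow_rootMultiplicity_mul_and_not_dvd hf 0
  have hg0 : ¬ (expand R n g).IsRoot 0 := by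
    rwa [IsRoot, expand_eval, zero_pow hn.ne', ← IsRoot, ← dvd_iff_isRoot]
  have hgn : expand R n g ≠ 0 := fun h => hg0 (by simp [h])
  conv_lhs => rw [hfg, map_mul, map_pow, map_sub, expand_X, expand_C, C_0, sub_zero, ← pow_mul,
    mul_comm, ← sub_zero (X : R[X]), ← C_0, rootMultiplicity_mul_X_sub_C_pow hgn,
    rootMultiplicity_eq_zero hg0, zero_add]

theorem Polynomial.rootMultiplicity_le_natDegree {R : Type*} [CommRing R] [IsDomain R]
    (p : R[X]) (a : R) : p.rootMultiplicity a ≤ p.natDegree := by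
  classical
  rw [← count_roots]
  exact (Multiset.count_le_card _ _).trans (card_roots' _)

theorem Polynomial.rootMultiplicity_prod_erase_add {ι R : Type*} [CommRing R] [IsDomain R]
    [DecidableEq ι] {s : Finset ι} {f : ι → R[X]} {k : ι} (hk : k ∈ s)
    (hf : ∀ j ∈ s, f j ≠ 0) (a : R) :
    (∏ j ∈ s.erase k, f j).rootMultiplicity a + (f k).rootMultiplicity a =
      (∏ j ∈ s, f j).rootMultiplicity a := by
  rw [← prod_erase_mul s f hk,
    rootMultiplicity_mul (prod_erase_mul s f hk ▸ prod_ne_zero_iff.2 hf)]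

theorem Polynomial.card_nthRootsFinset_of_ne_zero {F : Type*} [Field F] [IsAlgClosed F]
    [CharZero F] {n : ℕ} (hn : 0 < n) {a : F} (ha : a ≠ 0) : #(nthRootsFinset n a) = n := by
  classical
  have hsep : ((X : F[X]) ^ n - C a).Separable :=
    separable_X_pow_sub_C a (Nat.cast_ne_zero.mpr hn.ne') ha
  rw [nthRootsFinset_def, nthRoots, Multiset.toFinset_card_of_nodup (nodup_roots hsep),
    (splits_iff_card_roots).mp (IsAlgClosed.splits _), natDegree_X_pow_sub_C]

theorem Polynomial.exists_notMem_pow_eq {F : Type*} [Field F] [IsAlgClosed F] [CharZero F]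
    {n : ℕ} (hn : 0 < n) {a : F} (ha : a ≠ 0) {Z : Finset F} (hZ : #Z < n) :
    ∃ β ∉ Z, β ^ n = a := by
  obtain ⟨β, hβ, hβZ⟩ := exists_mem_notMem_of_card_lt_card
    (hZ.trans_eq (card_nthRootsFinset_of_ne_zero hn ha).symm)
  exact ⟨β, hβZ, (mem_nthRootsFinset hn a).1 hβ⟩

section PowIterates

variable {M : Type*} [Monoid M] [DecidableEq M] {b r : ℕ} {S : Finset M}

def Finset.powIterates (b r : ℕ) (S : Finset M) : Finset M :=
  (S ×ˢ range r).image fun p => p.1 ^ b ^ p.2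

theorem Finset.pow_mem_powIterates {ε : M} (hε : ε ∈ S) {i : ℕ} (hi : i < r) :
    ε ^ b ^ i ∈ S.powIterates b r :=
  mem_image.2 ⟨(ε, i), mem_product.2 ⟨hε, mem_range.2 hi⟩, rfl⟩

theorem Finset.injOn_pow_powIterates (hS : S ⊆ (S.powIterates b r).image (· ^ b)) :
    Set.InjOn (· ^ b) (S.powIterates b r : Set M) := by
  have hsurj : S.powIterates b r ⊆ (S.powIterates b r).image (· ^ b) := by
    intro γ hγ
    obtain ⟨⟨ε, i⟩, hεi, rfl⟩ := mem_image.1 hγ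
    obtain ⟨hε, hi⟩ := mem_product.1 hεi
    rcases i with _ | i
    · simpa using hS hε
    · have : i < r := by have := mem_range.1 hi; omega
      exact mem_image.2 ⟨_, pow_mem_powIterates hε this, by rw [← pow_mul, ← pow_succ]⟩
  exact card_image_iff.1 ((card_image_le).antisymm (card_le_card hsurj))

end PowIterates

theorem Finset.eq_empty_of_forall_pow_mem {F : Type*} [Field F] [IsAlgClosed F] [CharZero F]
    {b r : ℕ} (hb : 2 ≤ b) (hr : 0 < r) {S Z : Finset F} (hS : 0 ∉ S)
    (hZ : #Z < b ^ (r - 1))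
    (h : ∀ β : F, β ^ b ^ r ∈ S → β ∈ Z ∨ ∃ j < r, β ^ b ^ j ∈ S) : S = ∅ := by
  classical
  have hpowT {β : F} (hβ : β ^ b ^ r ∈ S) (hβZ : β ∉ Z) :
      β ^ b ^ (r - 1) ∈ S.powIterates b r := by
    obtain ⟨j, hj, hjS⟩ := (h β hβ).resolve_left hβZ
    convert pow_mem_powIterates (r := r) hjS (i := r - 1 - j) (by omega) using 1
    rw [← pow_mul, ← pow_add, Nat.add_sub_cancel' (by omega)]
  have hpow_succ (β : F) : (β ^ b ^ (r - 1)) ^ b = β ^ b ^ r := by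
    rw [← pow_mul, ← pow_succ, Nat.sub_add_cancel hr]
  have hST : S ⊆ (S.powIterates b r).image (· ^ b) := by
    intro δ hδ
    obtain ⟨β, hβZ, hβ⟩ := exists_notMem_pow_eq (n := b ^ r) (by positivity)
      (ne_of_mem_of_not_mem hδ hS)
      (hZ.trans_le (Nat.pow_le_pow_right (by omega) (by omega)))
    exact mem_image.2 ⟨_, hpowT (hβ ▸ hδ) hβZ, by rw [hpow_succ, hβ]⟩
  have hinj := injOn_pow_powIterates hST
  by_contra hne
  obtain ⟨δ, hδ⟩ := nonempty_iff_ne_empty.2 hne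
  obtain ⟨γ, hγ, hγδ⟩ := mem_image.1 (hST hδ)
  have hsub : nthRootsFinset (b ^ r) δ ⊆ Z ∪ nthRootsFinset (b ^ (r - 1)) γ := by
    intro β hβ
    rw [mem_nthRootsFinset (by positivity)] at hβ
    rw [mem_union, mem_nthRootsFinset (by positivity)]
    refine or_iff_not_imp_left.2 fun hβZ => hinj (hpowT (hβ ▸ hδ) hβZ) hγ ?_
    simp only [hpow_succ, hβ, hγδ]
  have := (card_le_card hsub).trans (card_union_le _ _)
  rw [card_nthRootsFinset_of_ne_zero (by positivity) (ne_of_mem_of_not_mem hδ hS),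
    card_nthRootsFinset_of_ne_zero (by positivity)] at this
  · have := add_pow_mul_lt_pow_mul hb hZ (k := r - 1) (z := 1) (by omega) one_pos
    omega
  · rintro rfl
    rw [zero_pow (by positivity)] at hγδ
    exact hS (hγδ ▸ hδ)

section MahlerEquation

variable {K : Type*} [Field K] {b r : ℕ} {ℓ : Fin (r + 1) → K[X]} {P Q : K[X]}

/-- With `y = P / Q`, this is `(∑ k, ℓ k * y (X ^ b ^ k)) * ∏ j, Q (X ^ b ^ j)`. -/
noncomputable def mahlerNumerator (b : ℕ) (ℓ : Fin (r + 1) → K[X]) (P Q : K[X]) : K[X] :=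
  ∑ k, ℓ k * expand K (b ^ (k : ℕ)) P * ∏ j ∈ univ.erase k, expand K (b ^ (j : ℕ)) Q

theorem mahlerNumerator_eq_zero {y : RatFunc K} (hb : 0 < b)
    (h : ∑ k : Fin (r + 1), algebraMap K[X] (RatFunc K) (ℓ k) *
      (algebraMap K[X] (RatFunc K) (y.num.comp (X ^ b ^ (k : ℕ))) /
        algebraMap K[X] (RatFunc K) (y.denom.comp (X ^ b ^ (k : ℕ)))) = 0) :
    mahlerNumerator b ℓ y.num y.denom = 0 := by
  simp only [← expand_eq_comp_X_pow] at h
  have hinj := IsFractionRing.injective K[X] (RatFunc K)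
  apply hinj
  simp only [mahlerNumerator, map_sum, map_mul, map_prod, map_zero]
  refine sum_mul_prod_erase_eq_zero (fun k _ => ?_) h
  rw [map_ne_zero_iff _ hinj, expand_ne_zero (by positivity)]
  exact y.denom_ne_zero

theorem expand_dvd_of_mahlerNumerator_eq_zero (hb : 0 < b) (hPQ : IsCoprime P Q)
    (h : mahlerNumerator b ℓ P Q = 0) :
    expand K (b ^ r) Q ∣
      ℓ (Fin.last r) * ∏ j ∈ univ.erase (Fin.last r), expand K (b ^ (j : ℕ)) Q :=
  dvd_mul_prod_erase_of_sum_eq_zero (a := ℓ) (p := fun k => expand K (b ^ (k : ℕ)) P)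
    (q := fun j => expand K (b ^ (j : ℕ)) Q) (mem_univ _)
    ((isCoprime_expand (by positivity)).2 hPQ.symm) h

theorem eval_zero_ne_zero_of_mahlerNumerator_eq_zero (hb : 2 ≤ b) (hr : 0 < r)
    (hℓ : ℓ (Fin.last r) ≠ 0) (hdeg : (ℓ (Fin.last r)).natDegree < b ^ (r - 1))
    (hPQ : IsCoprime P Q) (hQ : Q ≠ 0) (h : mahlerNumerator b ℓ P Q = 0) : Q.eval 0 ≠ 0 := by
  intro hQ0
  have hP0 : P.eval 0 ≠ 0 := fun hP0 => by
    obtain ⟨u, w, huw⟩ := hPQ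
    simpa [hP0, hQ0] using congrArg (eval 0) huw
  set q : Fin (r + 1) → K[X] := fun j => expand K (b ^ (j : ℕ)) Q
  set v := Q.rootMultiplicity 0
  have hv : 0 < v := (rootMultiplicity_pos hQ).2 hQ0
  have hq : ∀ j, q j ≠ 0 := fun j => (expand_ne_zero (by positivity)).2 hQ
  have hG : ∀ k, (∏ j ∈ univ.erase k, q j).rootMultiplicity 0 + b ^ (k : ℕ) * v =
      (∏ j, q j).rootMultiplicity 0 := by
    intro k
    rw [← rootMultiplicity_prod_erase_add (mem_univ k) (fun j _ => hq j),
      rootMultiplicity_zero_expand (by positivity)]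
  have hP' : expand K (b ^ r) P ≠ 0 :=
    (expand_ne_zero (by positivity)).2 fun h => hP0 (by simp [h])
  have hT : ℓ (Fin.last r) * expand K (b ^ r) P * ∏ j ∈ univ.erase (Fin.last r), q j ≠ 0 :=
    mul_ne_zero (mul_ne_zero hℓ hP') (prod_ne_zero_iff.2 fun j _ => hq j)
  have hs := le_rootMultiplicity_of_sum_eq_zero (f := fun k => ℓ k * expand K (b ^ (k : ℕ)) P *
      ∏ j ∈ univ.erase k, q j) (mem_univ (Fin.last r)) h hT (n :=
      (∏ j ∈ univ.erase (Fin.last r), q j).rootMultiplicity 0 + b ^ r * v - b ^ (r - 1) * v)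
      fun k _ hk => by
    have hk' : b ^ (k : ℕ) * v ≤ b ^ (r - 1) * v := Nat.mul_le_mul_right v
      (Nat.pow_le_pow_right (by omega) (by have := Fin.val_lt_last hk; omega))
    have := hG k
    have := hG (Fin.last r)
    simp only [Fin.val_last] at this
    refine (pow_dvd_pow _ ?_).trans ((pow_rootMultiplicity_dvd _ 0).trans (dvd_mul_left _ _))
    omega
  rw [Fin.val_last, rootMultiplicity_mul hT, rootMultiplicity_mul (left_ne_zero_of_mul hT),
    rootMultiplicity_eq_zero (p := expand K (b ^ r) P)
      (by rwa [IsRoot, expand_eval, zero_pow (by positivity)])] at hs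
  have := add_pow_mul_lt_pow_mul hb ((rootMultiplicity_le_natDegree _ 0).trans_lt hdeg)
    (k := r - 1) (by omega) hv
  have := hG (Fin.last r)
  have : b ^ (r - 1) * v ≤ b ^ r * v :=
    Nat.mul_le_mul_right v (Nat.pow_le_pow_right (by omega) (by omega))
  simp only [Fin.val_last] at *
  omega

theorem natDegree_le_of_mahlerNumerator_eq_zero (hb : 2 ≤ b) (hr : 0 < r)
    (hℓ : ℓ (Fin.last r) ≠ 0) (hdeg : ∀ k, (ℓ k).natDegree < b ^ (r - 1)) (hQ : Q ≠ 0)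
    (h : mahlerNumerator b ℓ P Q = 0) : P.natDegree ≤ Q.natDegree := by
  by_contra! hQP
  obtain ⟨z, hz⟩ := Nat.exists_eq_add_of_lt hQP
  have hP : P ≠ 0 := by rintro rfl; simp at hQP
  set q : Fin (r + 1) → K[X] := fun j => expand K (b ^ (j : ℕ)) Q
  have hq : ∀ j, q j ≠ 0 := fun j => (expand_ne_zero (by positivity)).2 hQ
  have hG : ∀ k, (∏ j ∈ univ.erase k, q j).natDegree + Q.natDegree * b ^ (k : ℕ) =
      (∏ j, q j).natDegree := by
    intro k
    rw [← mul_prod_erase univ q (mem_univ k), mul_comm (q k),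
      natDegree_mul (prod_ne_zero_iff.2 fun j _ => hq j) (hq k), natDegree_expand]
  have hPk : ∀ k : ℕ, P.natDegree * b ^ k = Q.natDegree * b ^ k + b ^ k * (z + 1) := by
    intro k; rw [hz]; ring
  have hT := natDegree_le_of_sum_eq_zero (f := fun k => ℓ k * expand K (b ^ (k : ℕ)) P *
      ∏ j ∈ univ.erase k, q j) (mem_univ (Fin.last r)) h
      (n := b ^ (r - 1) - 1 + b ^ (r - 1) * (z + 1) + (∏ j, q j).natDegree) fun k _ hk => by
    have hk' : b ^ (k : ℕ) * (z + 1) ≤ b ^ (r - 1) * (z + 1) := Nat.mul_le_mul_right _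
      (Nat.pow_le_pow_right (by omega) (by have := Fin.val_lt_last hk; omega))
    have := hdeg k
    have := hG k
    have := hPk k
    refine (natDegree_mul_le.trans (add_le_add_left natDegree_mul_le _)).trans ?_
    rw [natDegree_expand]
    omega
  have hP' : expand K (b ^ r) P ≠ 0 := (expand_ne_zero (by positivity)).2 hP
  rw [Fin.val_last, natDegree_mul (mul_ne_zero hℓ hP') (prod_ne_zero_iff.2 fun j _ => hq j),
    natDegree_mul hℓ hP', natDegree_expand] at hT
  have := add_pow_mul_lt_pow_mul (r := r) (d := b ^ (r - 1) - 1) (k := r - 1) hb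
    (Nat.sub_lt (by positivity) one_pos) (by omega) (by omega : 0 < z + 1)
  have := hG (Fin.last r)
  have := hPk r
  simp only [Fin.val_last] at *
  omega

theorem natDegree_eq_zero_of_expand_dvd [CharZero K] (hb : 2 ≤ b) (hr : 0 < r)
    (hℓ : ℓ (Fin.last r) ≠ 0) (hdeg : (ℓ (Fin.last r)).natDegree < b ^ (r - 1))
    (hQ0 : Q.eval 0 ≠ 0)
    (hdvd : expand K (b ^ r) Q ∣
      ℓ (Fin.last r) * ∏ j ∈ univ.erase (Fin.last r), expand K (b ^ (j : ℕ)) Q) :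
    Q.natDegree = 0 := by
  classical
  set QF := Q.map (algebraMap K (AlgebraicClosure K))
  set ℓF := (ℓ (Fin.last r)).map (algebraMap K (AlgebraicClosure K))
  have hQF : QF ≠ 0 := Polynomial.map_ne_zero fun h => hQ0 (by simp [h])
  have hroots : QF.roots.toFinset = ∅ := by
    refine eq_empty_of_forall_pow_mem hb hr (Z := ℓF.roots.toFinset) ?_ ?_ fun β hβ => ?_
    · rw [Multiset.mem_toFinset, mem_roots hQF, IsRoot, eval_zero_map]
      exact (_root_.map_ne_zero _).2 hQ0
    · exact (Multiset.toFinset_card_le _).trans_lt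
        ((card_roots' _).trans_lt (by rwa [natDegree_map]))
    · rw [Multiset.mem_toFinset, mem_roots hQF, IsRoot, ← expand_eval] at hβ
      have := eval_eq_zero_of_dvd_of_eval_eq_zero
        (Polynomial.map_dvd (algebraMap K (AlgebraicClosure K)) hdvd) (by rwa [map_expand])
      simp only [Polynomial.map_mul, Polynomial.map_prod, map_expand, eval_mul, eval_prod,
        expand_eval, mul_eq_zero, Finset.prod_eq_zero_iff] at this
      rcases this with hℓβ | ⟨j, hj, hjβ⟩
      · exact .inl (Multiset.mem_toFinset.2 ((mem_roots (Polynomial.map_ne_zero hℓ)).2 hℓβ))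
      · exact .inr ⟨j, Fin.val_lt_last (ne_of_mem_erase hj),
          Multiset.mem_toFinset.2 ((mem_roots hQF).2 hjβ)⟩
  rw [← natDegree_map (algebraMap K (AlgebraicClosure K))]
  by_contra hne
  obtain ⟨x, hx⟩ := IsAlgClosed.exists_root QF fun h => hne (natDegree_eq_of_degree_eq_some h)
  simpa [hroots] using (Multiset.mem_toFinset.2 ((mem_roots hQF).2 hx))

end MahlerEquation

theorem stmt_14_general {K : Type*} [Field K] [CharZero K] (b r d : ℕ) (hb : 2 ≤ b) (hr : 0 < r)
    (ℓ : Fin (r + 1) → K[X]) (hlr : ℓ (Fin.last r) ≠ 0)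
    (hd : d = Finset.univ.sup fun k => (ℓ k).natDegree)
    (hsmall : d < b ^ (r - 1))
    (y : RatFunc K)
    (hsol : ∑ k : Fin (r + 1),
        algebraMap K[X] (RatFunc K) (ℓ k) *
          (algebraMap K[X] (RatFunc K) (y.num.comp (X ^ b ^ (k : ℕ))) /
            algebraMap K[X] (RatFunc K) (y.denom.comp (X ^ b ^ (k : ℕ)))) = 0) :
    ∃ c : K, y = RatFunc.C c := by
  have hdeg : ∀ k, (ℓ k).natDegree < b ^ (r - 1) := fun k =>
    (hd ▸ Finset.le_sup (f := fun k => (ℓ k).natDegree) (Finset.mem_univ k)).trans_lt hsmall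
  have h := mahlerNumerator_eq_zero (by omega) hsol
  have hQ0 := eval_zero_ne_zero_of_mahlerNumerator_eq_zero hb hr hlr (hdeg _)
    y.isCoprime_num_denom y.denom_ne_zero h
  have hQ := natDegree_eq_zero_of_expand_dvd hb hr hlr (hdeg _) hQ0
    (expand_dvd_of_mahlerNumerator_eq_zero (by omega) y.isCoprime_num_denom h)
  have hP := natDegree_le_of_mahlerNumerator_eq_zero hb hr hlr hdeg y.denom_ne_zero h
  obtain ⟨p, hp⟩ : ∃ p, y.num = C p := ⟨_, eq_C_of_natDegree_eq_zero (by omega)⟩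
  obtain ⟨q, hq⟩ : ∃ q, y.denom = C q := ⟨_, eq_C_of_natDegree_eq_zero hQ⟩
  refine ⟨p / q, ?_⟩
  rw [← y.num_div_denom, hp, hq, RatFunc.algebraMap_C, RatFunc.algebraMap_C, map_div₀]

theorem stmt_14 {K : Type*} [Field K] [CharZero K] (b r d : ℕ) (hb : 2 ≤ b) (hr : 0 < r)
    (ℓ : Fin (r + 1) → K[X]) (hl0 : ℓ 0 ≠ 0) (hlr : ℓ (Fin.last r) ≠ 0)
    (hd : d = Finset.univ.sup fun k => (ℓ k).natDegree)
    (hsmall : d < b ^ (r - 1))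
    (y : RatFunc K)
    (hsol : ∑ k : Fin (r + 1),
        algebraMap K[X] (RatFunc K) (ℓ k) *
          (algebraMap K[X] (RatFunc K) (y.num.comp (X ^ b ^ (k : ℕ))) /
            algebraMap K[X] (RatFunc K) (y.denom.comp (X ^ b ^ (k : ℕ)))) = 0) :
    ∃ c : K, y = RatFunc.C c :=
  stmt_14_general b r d hb hr ℓ hlr hd hsmall y hsol
end

section
/- Let b ≥ 2, and let L = ℓ_r M^r + ⋯ + ℓ_0 with ℓ_0 ℓ_r ≠ 0. Suppose y = p/(x^v̄ q) is a rational solution of L y = 0 written in lowest terms (v̄ ≥ 0, p, q coprime, q(0) ≠ 0, and p(0) ≠ 0 if v̄ > 0). Then M^r(q) divides ℓ_r · lcm_{0 ≤ i ≤ r−1} M^i(q). -/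
open Polynomial

noncomputable section

/-- The least common multiple of a list of polynomials over a field. -/
def polyLcm {K : Type*} [Field K] (l : List K[X]) : K[X] :=
  letI := Classical.decEq K[X]
  l.foldr EuclideanDomain.lcm 1

/-!
Write `D_k = M^k (x^v̄ q) = x^(b^k v̄) M^k q`. For `k < r` each `D_k` divides
`E = x^(b^r v̄) T q`, so multiplying `L y = 0` by `E` leaves `ℓ_r M^r p · E / D_r` as the
only term that is not visibly a polynomial; it must therefore be one, i.e.
`M^r q ∣ ℓ_r M^r p · T q`. Since the ring endomorphism `M` preserves the coprimality of `p`
and `q`, `M^r q ∣ ℓ_r T q`.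
-/

lemma dvd_polyLcm {K : Type*} [Field K] {l : List K[X]} {x : K[X]} (hx : x ∈ l) :
    x ∣ polyLcm l := by
  let := Classical.decEq K[X]
  unfold polyLcm
  induction l with
  | nil => simp at hx
  | cons a t ih =>
    rcases List.mem_cons.1 hx with rfl | h
    · exact EuclideanDomain.dvd_lcm_left _ _
    · exact (ih h).trans (EuclideanDomain.dvd_lcm_right _ _)

theorem dvd_mul_of_sum_div_eq_zero {R F : Type*} [CommRing R] [Field F] (φ : R →+* F)
    (hφ : Function.Injective φ) {r : ℕ} (a d : Fin (r + 1) → R) (E : R)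
    (hd : ∀ k, d k ≠ 0) (hE : ∀ k : Fin r, d k.castSucc ∣ E)
    (hsum : ∑ k, φ (a k) / φ (d k) = 0) :
    d (Fin.last r) ∣ a (Fin.last r) * E := by
  choose u hu using hE
  have hφd : ∀ k, φ (d k) ≠ 0 := fun k => (map_ne_zero_iff φ hφ).2 (hd k)
  set S := ∑ k : Fin r, a k.castSucc * u k
  have hcleared : φ S + φ (a (Fin.last r) * E) / φ (d (Fin.last r)) = 0 := by
    rw [← zero_mul (φ E), ← hsum, Fin.sum_univ_castSucc, add_mul, Finset.sum_mul, map_sum]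
    congr 1
    · refine Finset.sum_congr rfl fun k _ => ?_
      rw [hu k, map_mul, map_mul]
      field_simp [hφd k.castSucc]
    · rw [map_mul]
      ring
  have hlast : φ (a (Fin.last r) * E) = φ (d (Fin.last r) * -S) := by
    have hquot : φ (a (Fin.last r) * E) / φ (d (Fin.last r)) = -φ S := by
      linear_combination hcleared
    rw [div_eq_iff (hφd _)] at hquot
    rw [hquot, map_mul, map_neg, mul_comm]
  exact ⟨-S, hφ hlast⟩

lemma expand_X_pow_mul {R : Type*} [CommRing R] (n v : ℕ) (q : R[X]) :
    expand R n (X ^ v * q) = X ^ (n * v) * expand R n q := by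
  rw [map_mul, map_pow, expand_X, ← pow_mul]

theorem stmt_15_general {K : Type*} [Field K] (b r : ℕ) (hb : 2 ≤ b)
    (ℓ : Fin (r + 1) → K[X])
    (p q : K[X]) (v : ℕ) (hcop : IsCoprime p q) (hq0 : q.eval 0 ≠ 0)
    (hsol : ∑ k : Fin (r + 1),
        algebraMap K[X] (RatFunc K) (ℓ k) *
          (algebraMap K[X] (RatFunc K) (p.comp (X ^ b ^ (k : ℕ))) /
            algebraMap K[X] (RatFunc K) ((X ^ v * q).comp (X ^ b ^ (k : ℕ)))) = 0) :
    q.comp (X ^ b ^ r) ∣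
      ℓ (Fin.last r) * polyLcm ((List.range r).map fun i => q.comp (X ^ b ^ i)) := by
  have hq : q ≠ 0 := by rintro rfl; simp at hq0
  simp only [← expand_eq_comp_X_pow, ← mul_div_assoc, ← map_mul] at hsol ⊢
  set T := polyLcm ((List.range r).map fun i => expand K (b ^ i) q)
  have hdvd := dvd_mul_of_sum_div_eq_zero _ (IsFractionRing.injective K[X] (RatFunc K))
    (fun k => ℓ k * expand K (b ^ (k : ℕ)) p) (fun k => expand K (b ^ (k : ℕ)) (X ^ v * q))
    (X ^ (b ^ r * v) * T)
    (fun k => (expand_ne_zero (by positivity)).2 (mul_ne_zero (pow_ne_zero _ X_ne_zero) hq))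
    (fun k => by
      simp only [Fin.val_castSucc, expand_X_pow_mul]
      exact mul_dvd_mul
        (pow_dvd_pow X (Nat.mul_le_mul_right _ (Nat.pow_le_pow_right (by omega) k.2.le)))
        (dvd_polyLcm (List.mem_map_of_mem (List.mem_range.2 k.2))))
    hsol
  simp only [Fin.val_last, expand_X_pow_mul] at hdvd
  have hcancel : expand K (b ^ r) q ∣ expand K (b ^ r) p * (ℓ (Fin.last r) * T) := by
    refine (mul_dvd_mul_iff_left (pow_ne_zero (b ^ r * v) (X_ne_zero (R := K)))).1 ?_
    convert hdvd using 1
    ring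
  have hcop' : IsCoprime (expand K (b ^ r) q) (expand K (b ^ r) p) :=
    hcop.symm.map (expand K (b ^ r)).toRingHom
  exact hcop'.dvd_of_dvd_mul_left hcancel

theorem stmt_15 {K : Type*} [Field K] (b r : ℕ) (hb : 2 ≤ b) (hr : 0 < r)
    (ℓ : Fin (r + 1) → K[X]) (hl0 : ℓ 0 ≠ 0) (hlr : ℓ (Fin.last r) ≠ 0)
    (p q : K[X]) (v : ℕ) (hcop : IsCoprime p q) (hq0 : q.eval 0 ≠ 0)
    (hp0 : 0 < v → p.eval 0 ≠ 0)
    (hsol : ∑ k : Fin (r + 1),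
        algebraMap K[X] (RatFunc K) (ℓ k) *
          (algebraMap K[X] (RatFunc K) (p.comp (X ^ b ^ (k : ℕ))) /
            algebraMap K[X] (RatFunc K) ((X ^ v * q).comp (X ^ b ^ (k : ℕ)))) = 0) :
    q.comp (X ^ b ^ r) ∣
      ℓ (Fin.last r) * polyLcm ((List.range r).map fun i => q.comp (X ^ b ^ i)) :=
  stmt_15_general b r hb ℓ p q v hcop hq0 hsol
end
end

section
/- Let b ≥ 2, ω a primitive b-th root of unity in K, and f_0, …, f_{b−1}, u ∈ K[x]. The polynomial ℓ = M(f_0) + x·M(f_1) + ⋯ + x^{b−1}·M(f_{b−1}) is divisible by M(u) if and only if u divides each f_i for 0 ≤ i < b. -/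
/-!
Every polynomial `q` splits uniquely as `∑_{i<b} X^i · M(g_i)`, the summand `X^i · M(g_i)`
collecting the monomials of `q` whose degree is `≡ i (mod b)`. Hence if `M(u) * q = ℓ` with
`q = ∑ X^i · M(g_i)`, then `ℓ = ∑ X^i · M(u g_i)` and uniqueness gives `f_i = u g_i`.
-/

open Polynomial

namespace Polynomial

variable {R : Type*} [CommSemiring R] {b : ℕ}

theorem coeff_sum_X_pow_mul_expand (hb : 0 < b) (g : Fin b → R[X]) (i : Fin b) (n : ℕ) :
    (∑ j : Fin b, X ^ (j : ℕ) * expand R b (g j)).coeff (b * n + i) = (g i).coeff n := by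
  rw [finsetSum_coeff, Fintype.sum_eq_single i, coeff_X_pow_mul, coeff_expand_mul' hb]
  intro j hji
  rw [coeff_X_pow_mul', coeff_expand hb]
  split_ifs with hj hdvd
  · obtain ⟨k, hk⟩ := hdvd
    have hmod := congrArg (· % b) (show b * n + i = b * k + j by omega)
    simp only [Nat.mul_add_mod, Nat.mod_eq_of_lt i.isLt, Nat.mod_eq_of_lt j.isLt] at hmod
    exact absurd (Fin.ext hmod.symm) hji
  all_goals rfl

theorem sum_X_pow_mul_expand_injective (hb : 0 < b) :
    Function.Injective fun g : Fin b → R[X] => ∑ j : Fin b, X ^ (j : ℕ) * expand R b (g j) := by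
  intro g h hgh
  funext i
  ext n
  dsimp only at hgh
  rw [← coeff_sum_X_pow_mul_expand hb g i n, hgh, coeff_sum_X_pow_mul_expand hb h i n]

theorem exists_sum_X_pow_mul_expand_eq (hb : 0 < b) (q : R[X]) :
    ∃ g : Fin b → R[X], ∑ j : Fin b, X ^ (j : ℕ) * expand R b (g j) = q := by
  induction q using Polynomial.induction_on' with
  | add p q hp hq =>
    obtain ⟨g, rfl⟩ := hp
    obtain ⟨h, rfl⟩ := hq
    exact ⟨g + h, by simp only [Pi.add_apply, map_add, mul_add, Finset.sum_add_distrib]⟩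
  | monomial n a =>
    refine ⟨Pi.single ⟨n % b, Nat.mod_lt n hb⟩ (monomial (n / b) a), ?_⟩
    rw [Fintype.sum_eq_single ⟨n % b, Nat.mod_lt n hb⟩ fun j hj => by simp [hj]]
    rw [Pi.single_eq_same, expand_monomial, X_pow_mul_monomial, Nat.div_add_mod']

theorem expand_dvd_sum_X_pow_mul_expand_iff (hb : 0 < b) (f : Fin b → R[X]) (u : R[X]) :
    expand R b u ∣ ∑ i : Fin b, X ^ (i : ℕ) * expand R b (f i) ↔ ∀ i, u ∣ f i := by
  constructor
  · rintro ⟨q, hq⟩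
    obtain ⟨g, rfl⟩ := exists_sum_X_pow_mul_expand_eq hb q
    have hf : f = fun i => u * g i := by
      refine sum_X_pow_mul_expand_injective hb ?_
      simp only [hq, Finset.mul_sum, map_mul]
      exact Finset.sum_congr rfl fun i _ => mul_left_comm _ _ _
    exact fun i => ⟨g i, congrFun hf i⟩
  · exact fun h => Finset.dvd_sum fun i _ => (_root_.map_dvd (expand R b) (h i)).mul_left _

end Polynomial

theorem stmt_17_general {K : Type*} [Field K] (b : ℕ) (hb : 2 ≤ b)
    (f : Fin b → K[X]) (u : K[X]) :
    u.comp (X ^ b) ∣ ∑ i : Fin b, X ^ (i : ℕ) * (f i).comp (X ^ b) ↔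
      ∀ i : Fin b, u ∣ f i := by
  simp_rw [← expand_eq_comp_X_pow]
  exact expand_dvd_sum_X_pow_mul_expand_iff (by omega) f u

theorem stmt_17 {K : Type*} [Field K] (b : ℕ) (hb : 2 ≤ b)
    (ω : K) (hω : IsPrimitiveRoot ω b)
    (f : Fin b → K[X]) (u : K[X]) :
    u.comp (X ^ b) ∣ ∑ i : Fin b, X ^ (i : ℕ) * (f i).comp (X ^ b) ↔
      ∀ i : Fin b, u ∣ f i :=
  stmt_17_general b hb f u
end

section
/- Let b ≥ 2 and let L = ℓ_r M^r + ⋯ + ℓ_0 be a Mahler operator with polynomial coefficients and ℓ_0 ≠ 0. If the leftmost edge of the lower Newton polygon of L is horizontal (i.e., ν = max_{k ≥ 1} (v_0 − v_k)/(b^k − 1) = 0, so v_0 ≤ v_k for all k with equality for some k ≥ 1) and admissible (the coefficients of x^{v_0} in ℓ_0 and of x^{v_k} in those ℓ_k with v_k = v_0 sum to zero), then the equation L y = 0 admits a formal power series solution y ∈ K[[x]] with y(0) ≠ 0. -/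
/-!
Every `ℓ k` is divisible by `X ^ v` with `v = v₀`, so `L = X ^ v * L'`, where the coefficients of
`L'` have constant terms `(ℓ k).coeff v`. If `z` has order at least `n ≥ 1`, then `z(x^(b^k))` has
order at least `b^k n > n` for `k ≥ 1`, so the `n`-th coefficient of `L' z` is
`(ℓ 0).coeff v * coeff n z`. Hence `L'` is triangular with invertible diagonal beyond degree `0`, and
the coefficients of `y` can be solved for one at a time; in degree `0` the coefficient of `L' y` is
`(∑ k, (ℓ k).coeff v) * y₀`, which vanishes by admissibility.
-/

open Polynomial

noncomputable section

/-- The Mahler substitution `y(x) ↦ y(x^c)` on formal power series. -/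
def mahlerPS {K : Type*} [Field K] (c : ℕ) (y : PowerSeries K) : PowerSeries K :=
  PowerSeries.mk fun n => if c ∣ n then PowerSeries.coeff (n / c) y else 0

open scoped PowerSeries

namespace PowerSeries

variable {K : Type*} [Field K]

theorem exists_coeff_map_eq_zero_of_triangular (F : K⟦X⟧ →+ K⟦X⟧) {c : K} (hc : c ≠ 0)
    (hF : ∀ n, 0 < n → ∀ z : K⟦X⟧, (∀ j < n, coeff j z = 0) → coeff n (F z) = c * coeff n z) :
    ∃ y : K⟦X⟧, constantCoeff y = 1 ∧ ∀ n, 0 < n → coeff n (F y) = 0 := by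
  let y : ℕ → K := Nat.strongRec fun n f =>
    if n = 0 then 1 else -c⁻¹ * coeff n (F (mk fun j => if h : j < n then f j h else 0))
  have hy : ∀ n, y n = if n = 0 then 1 else -c⁻¹ * coeff n (F (trunc n (mk y) : K⟦X⟧)) := by
    intro n
    rw [show y n = _ from Nat.strongRec_eq _ n]
    congr 4
    ext j
    simp only [coeff_mk, Polynomial.coeff_coe, coeff_trunc]
    split_ifs <;> rfl
  refine ⟨mk y, by simpa using hy 0, fun n hn => ?_⟩
  have htail : ∀ j < n, coeff j (mk y - trunc n (mk y) : K⟦X⟧) = 0 := by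
    intro j hj
    simp [coeff_trunc, hj]
  calc coeff n (F (mk y))
      = coeff n (F (trunc n (mk y) : K⟦X⟧)) + coeff n (F (mk y - trunc n (mk y) : K⟦X⟧)) := by
        rw [← map_add, ← map_add, add_sub_cancel]
    _ = coeff n (F (trunc n (mk y) : K⟦X⟧)) + c * y n := by
        rw [hF n hn _ htail]
        simp [coeff_trunc]
    _ = 0 := by
        rw [hy n, if_neg hn.ne']
        field_simp
        ring

end PowerSeries

section Mahler

open PowerSeries

variable {K : Type*} [Field K]

theorem coeff_mahlerPS (c n : ℕ) (y : K⟦X⟧) :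
    coeff n (mahlerPS c y) = if c ∣ n then coeff (n / c) y else 0 :=
  coeff_mk _ _

theorem mahlerPS_add (c : ℕ) (y z : K⟦X⟧) : mahlerPS c (y + z) = mahlerPS c y + mahlerPS c z := by
  ext n
  simp only [coeff_mahlerPS, map_add]
  split_ifs <;> simp

theorem coeff_mul_mahlerPS_of_coeff_lt_eq_zero (a : K⟦X⟧) (c : ℕ) {n : ℕ} {z : K⟦X⟧}
    (hz : ∀ j < n, coeff j z = 0) :
    coeff n (a * mahlerPS c z) = if c = 1 ∨ n = 0 then constantCoeff a * coeff n z else 0 := by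
  rw [PowerSeries.coeff_mul, Finset.sum_eq_single (0, n)]
  · rw [coeff_zero_eq_constantCoeff_apply, coeff_mahlerPS]
    by_cases hcn : c = 1 ∨ n = 0
    · rcases hcn with rfl | rfl <;> simp
    · rw [if_neg hcn]
      split_ifs with hdvd
      · have hc0 : c ≠ 0 := by rintro rfl; exact hcn (Or.inr (Nat.eq_zero_of_zero_dvd hdvd))
        rw [hz _ (Nat.div_lt_self (by omega) (by omega)), mul_zero]
      · rw [mul_zero]
  · rintro ⟨i, m⟩ him hne
    rw [Finset.HasAntidiagonal.mem_antidiagonal] at him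
    have hm : m < n := by
      rcases Nat.eq_zero_or_pos i with rfl | hi
      · exact absurd (by rw [← him, zero_add]) hne
      · omega
    rw [coeff_mahlerPS]
    split_ifs
    · rw [hz _ ((Nat.div_le_self m c).trans_lt hm), mul_zero]
    · rw [mul_zero]
  · simp

def mahlerOperator (b : ℕ) {r : ℕ} (a : Fin (r + 1) → K⟦X⟧) : K⟦X⟧ →+ K⟦X⟧ :=
  AddMonoidHom.mk' (fun y => ∑ k, a k * mahlerPS (b ^ (k : ℕ)) y) fun y z => by
    simp only [mahlerPS_add, mul_add, Finset.sum_add_distrib]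

theorem coeff_mahlerOperator_of_coeff_lt_eq_zero (b : ℕ) {r : ℕ} (a : Fin (r + 1) → K⟦X⟧)
    {n : ℕ} {z : K⟦X⟧} (hz : ∀ j < n, coeff j z = 0) :
    coeff n (mahlerOperator b a z) =
      ∑ k : Fin (r + 1), if b ^ (k : ℕ) = 1 ∨ n = 0 then constantCoeff (a k) * coeff n z else 0 := by
  simp only [mahlerOperator, AddMonoidHom.mk'_apply, map_sum,
    coeff_mul_mahlerPS_of_coeff_lt_eq_zero _ _ hz]

theorem exists_mahlerOperator_eq_zero {b : ℕ} (hb : b ≠ 1) {r : ℕ} (a : Fin (r + 1) → K⟦X⟧)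
    (ha0 : constantCoeff (a 0) ≠ 0) (hadm : ∑ k, constantCoeff (a k) = 0) :
    ∃ y, mahlerOperator b a y = 0 ∧ constantCoeff y = 1 := by
  have hdiag : ∀ n, 0 < n → ∀ z : K⟦X⟧, (∀ j < n, coeff j z = 0) →
      coeff n (mahlerOperator b a z) = constantCoeff (a 0) * coeff n z := by
    intro n hn z hz
    rw [coeff_mahlerOperator_of_coeff_lt_eq_zero b a hz, Finset.sum_eq_single 0]
    · simp
    · intro k _ hk
      simp [hb, Fin.val_eq_zero_iff, hk, hn.ne']
    · simp
  obtain ⟨y, hy0, hy⟩ := exists_coeff_map_eq_zero_of_triangular _ ha0 hdiag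
  refine ⟨y, ext fun n => ?_, hy0⟩
  rcases n.eq_zero_or_pos with rfl | hn
  · rw [coeff_mahlerOperator_of_coeff_lt_eq_zero b a fun j hj => absurd hj j.not_lt_zero]
    simp [← Finset.sum_mul, hadm]
  · exact hy n hn

end Mahler

theorem stmt_18_general {K : Type*} [Field K] (b r : ℕ) (hb : 2 ≤ b)
    (ℓ : Fin (r + 1) → K[X]) (hl0 : ℓ 0 ≠ 0)
    (hmin : ∀ k : Fin (r + 1), ℓ k ≠ 0 →
      (ℓ 0).natTrailingDegree ≤ (ℓ k).natTrailingDegree)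
    (hadm : ∑ k : Fin (r + 1), (ℓ k).coeff (ℓ 0).natTrailingDegree = 0) :
    ∃ y : PowerSeries K,
      (∑ k : Fin (r + 1), (↑(ℓ k) : PowerSeries K) * mahlerPS (b ^ (k : ℕ)) y = 0) ∧
      PowerSeries.constantCoeff y ≠ 0 := by
  set v := (ℓ 0).natTrailingDegree
  have hdvd : ∀ k, X ^ v ∣ ℓ k := fun k => X_pow_dvd_iff.mpr fun d hd => by
    by_cases hk : ℓ k = 0
    · simp [hk]
    · exact coeff_eq_zero_of_lt_natTrailingDegree (hd.trans_le (hmin k hk))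
  choose q hq using hdvd
  have hcoeff : ∀ k, PowerSeries.constantCoeff (q k : K⟦X⟧) = (ℓ k).coeff v := fun k => by
    rw [hq k, ← PowerSeries.coeff_zero_eq_constantCoeff_apply, Polynomial.coeff_coe,
      ← coeff_X_pow_mul (q k) v 0, zero_add]
  obtain ⟨y, hy, hy0⟩ := exists_mahlerOperator_eq_zero (b := b) (by omega)
    (fun k => (q k : K⟦X⟧)) (by rw [hcoeff]; exact mt trailingCoeff_eq_zero.mp hl0)
    (by simp only [hcoeff]; exact hadm)
  refine ⟨y, ?_, hy0 ▸ one_ne_zero⟩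
  simp only [hq, Polynomial.coe_mul, Polynomial.coe_pow, Polynomial.coe_X, mul_assoc,
    ← Finset.mul_sum]
  exact mul_eq_zero_of_right _ hy

theorem stmt_18 {K : Type*} [Field K] (b r : ℕ) (hb : 2 ≤ b) (hr : 0 < r)
    (ℓ : Fin (r + 1) → K[X]) (hl0 : ℓ 0 ≠ 0) (hlr : ℓ (Fin.last r) ≠ 0)
    (hmin : ∀ k : Fin (r + 1), ℓ k ≠ 0 →
      (ℓ 0).natTrailingDegree ≤ (ℓ k).natTrailingDegree)
    (hhoriz : ∃ k : Fin (r + 1), k ≠ 0 ∧ ℓ k ≠ 0 ∧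
      (ℓ k).natTrailingDegree = (ℓ 0).natTrailingDegree)
    (hadm : ∑ k : Fin (r + 1), (ℓ k).coeff (ℓ 0).natTrailingDegree = 0) :
    ∃ y : PowerSeries K,
      (∑ k : Fin (r + 1), (↑(ℓ k) : PowerSeries K) * mahlerPS (b ^ (k : ℕ)) y = 0) ∧
      PowerSeries.constantCoeff y ≠ 0 :=
  stmt_18_general b r hb ℓ hl0 hmin hadm
end
end
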